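/- arXiv:1709.08051 — 2 statements merged into one kernel-verified Lean document; each statement's English description precedes it below -/
import Mathlib

section
/- Let (R, ρ, E) be a partial A-comodule algebra over a regular multiplier Hopf algebra A. Then R is a (global) A-comodule algebra via ρ if and only if E = 1_{M(R)} ⊗ 1_{M(A)}. -/
/- ## Preliminaries: multiplier algebras and (regular) multiplier Hopf algebras -/

open scoped TensorProduct
open TensorProduct LinearMap
set_option linter.unusedSectionVars false

noncomputable section

variable (k : Type*) [Field k]

section MultiplierAlgebra

variable (A : Type*) [NonUnitalRing A] [Module k A] [SMulCommClass k A A] [IsScalarTower k A A]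

/-- The product of an algebra is *nondegenerate*. -/
def NondegProd : Prop :=
  (∀ a : A, (∀ b : A, a * b = 0) → a = 0) ∧ ∀ b : A, (∀ a : A, a * b = 0) → b = 0

/-- A multiplier of `A`: a pair `(U, V)` of linear maps with `U (a*b) = U a * b`,
`V (a*b) = a * V b` and `V a * b = a * U b`. -/
@[ext] structure Multiplier where
  U : A →ₗ[k] A
  V : A →ₗ[k] A
  U_mul : ∀ a b : A, U (a * b) = U a * b
  V_mul : ∀ a b : A, V (a * b) = a * V b
  compat : ∀ a b : A, V a * b = a * U b

namespace Multiplier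

variable {k A}

instance : Zero (Multiplier k A) := ⟨⟨0, 0, by simp, by simp, by simp⟩⟩
instance : Add (Multiplier k A) :=
  ⟨fun m n => ⟨m.U + n.U, m.V + n.V,
    by simp [m.U_mul, n.U_mul, add_mul],
    by simp [m.V_mul, n.V_mul, mul_add],
    by simp [add_mul, mul_add, m.compat, n.compat]⟩⟩
instance : Neg (Multiplier k A) :=
  ⟨fun m => ⟨-m.U, -m.V, by simp [m.U_mul], by simp [m.V_mul],
    by simp [m.compat]⟩⟩
instance : SMul k (Multiplier k A) :=
  ⟨fun c m => ⟨c • m.U, c • m.V,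
    by simp [m.U_mul, smul_mul_assoc],
    by simp [m.V_mul, mul_smul_comm],
    by simp [smul_mul_assoc, mul_smul_comm, m.compat]⟩⟩

@[simp] lemma zero_U : (0 : Multiplier k A).U = 0 := rfl
@[simp] lemma zero_V : (0 : Multiplier k A).V = 0 := rfl
@[simp] lemma add_U (m n : Multiplier k A) : (m + n).U = m.U + n.U := rfl
@[simp] lemma add_V (m n : Multiplier k A) : (m + n).V = m.V + n.V := rfl
@[simp] lemma neg_U (m : Multiplier k A) : (-m).U = -m.U := rfl
@[simp] lemma neg_V (m : Multiplier k A) : (-m).V = -m.V := rfl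
@[simp] lemma smul_U (c : k) (m : Multiplier k A) : (c • m).U = c • m.U := rfl
@[simp] lemma smul_V (c : k) (m : Multiplier k A) : (c • m).V = c • m.V := rfl

instance : AddCommGroup (Multiplier k A) where
  add_assoc a b c := by ext x <;> simp [add_assoc]
  zero_add a := by ext x <;> simp
  add_zero a := by ext x <;> simp
  add_comm a b := by ext x <;> simp [add_comm]
  neg_add_cancel a := by ext x <;> simp
  nsmul := nsmulRec
  zsmul := zsmulRec

instance : Module k (Multiplier k A) where
  one_smul m := by ext x <;> simp
  mul_smul c d m := by ext x <;> simp [mul_smul]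
  smul_zero c := by ext x <;> simp
  smul_add c m n := by ext x <;> simp
  add_smul c d m := by ext x <;> simp [add_smul]
  zero_smul m := by ext x <;> simp

instance : One (Multiplier k A) := ⟨⟨LinearMap.id, LinearMap.id, by simp, by simp, by simp⟩⟩
instance : Mul (Multiplier k A) :=
  ⟨fun m n => ⟨m.U ∘ₗ n.U, n.V ∘ₗ m.V,
    by simp [n.U_mul, m.U_mul],
    by simp [m.V_mul, n.V_mul],
    by intro a b; simp only [LinearMap.comp_apply]; rw [n.compat, m.compat]⟩⟩

@[simp] lemma one_U : (1 : Multiplier k A).U = LinearMap.id := rfl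
@[simp] lemma one_V : (1 : Multiplier k A).V = LinearMap.id := rfl
@[simp] lemma mul_U (m n : Multiplier k A) : (m * n).U = m.U ∘ₗ n.U := rfl
@[simp] lemma mul_V (m n : Multiplier k A) : (m * n).V = n.V ∘ₗ m.V := rfl

instance : Monoid (Multiplier k A) where
  mul_assoc a b c := by ext x <;> simp
  one_mul a := by ext x <;> simp
  mul_one a := by ext x <;> simp

/-- The canonical map `A → M(A)` given by left and right multiplication. -/
def incl (a : A) : Multiplier k A :=
  ⟨LinearMap.mulLeft k a, LinearMap.mulRight k a,
    fun b c => by simp [mul_assoc], fun b c => by simp [mul_assoc],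
    fun b c => by simp [mul_assoc]⟩

@[simp] lemma incl_U (a b : A) : (incl (k := k) a).U b = a * b := rfl
@[simp] lemma incl_V (a b : A) : (incl (k := k) a).V b = b * a := rfl

/-- The canonical map `A → M(A)` as a linear map. -/
def inclL : A →ₗ[k] Multiplier k A where
  toFun := incl
  map_add' a b := by ext x <;> simp [add_mul, mul_add]
  map_smul' c a := by ext x <;> simp [smul_mul_assoc, mul_smul_comm]

@[simp] lemma inclL_apply (a : A) : (inclL (k := k) a) = incl a := rfl

/-- The `U`-component, as a linear map. -/
def Ulm : Multiplier k A →ₗ[k] A →ₗ[k] A where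
  toFun m := m.U
  map_add' _ _ := rfl
  map_smul' _ _ := rfl

/-- The `V`-component, as a linear map. -/
def Vlm : Multiplier k A →ₗ[k] A →ₗ[k] A where
  toFun m := m.V
  map_add' _ _ := rfl
  map_smul' _ _ := rfl

end Multiplier

end MultiplierAlgebra

section Tensor

variable (R : Type*) [NonUnitalRing R] [Module k R] [SMulCommClass k R R] [IsScalarTower k R R]
variable (A : Type*) [NonUnitalRing A] [Module k A] [SMulCommClass k A A] [IsScalarTower k A A]

/-- The multiplier `1 ⊗ a` of `R ⊗ A`. -/
def oneT (a : A) : Multiplier k (R ⊗[k] A) where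
  U := lTensor R (LinearMap.mulLeft k a)
  V := lTensor R (LinearMap.mulRight k a)
  U_mul u v := by
    induction u with
    | zero => simp
    | add u₁ u₂ h₁ h₂ => simp [add_mul, h₁, h₂]
    | tmul x b =>
      induction v with
      | zero => simp
      | add v₁ v₂ h₁ h₂ => simp [mul_add, h₁, h₂]
      | tmul y c => simp [Algebra.TensorProduct.tmul_mul_tmul, mul_assoc]
  V_mul u v := by
    induction u with
    | zero => simp
    | add u₁ u₂ h₁ h₂ => simp [add_mul, h₁, h₂]
    | tmul x b =>
      induction v with
      | zero => simp
      | add v₁ v₂ h₁ h₂ => simp [mul_add, h₁, h₂]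
      | tmul y c => simp [Algebra.TensorProduct.tmul_mul_tmul, mul_assoc]
  compat u v := by
    induction u with
    | zero => simp
    | add u₁ u₂ h₁ h₂ => simp [add_mul, h₁, h₂]
    | tmul x b =>
      induction v with
      | zero => simp
      | add v₁ v₂ h₁ h₂ => simp only [map_add, mul_add, h₁, h₂]
      | tmul y c => simp [Algebra.TensorProduct.tmul_mul_tmul, mul_assoc]

/-- The multiplier `x ⊗ 1` of `R ⊗ A`. -/
def tOne (x : R) : Multiplier k (R ⊗[k] A) where
  U := rTensor A (LinearMap.mulLeft k x)
  V := rTensor A (LinearMap.mulRight k x)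
  U_mul u v := by
    induction u with
    | zero => simp
    | add u₁ u₂ h₁ h₂ => simp [add_mul, h₁, h₂]
    | tmul y b =>
      induction v with
      | zero => simp
      | add v₁ v₂ h₁ h₂ => simp [mul_add, h₁, h₂]
      | tmul z c => simp [Algebra.TensorProduct.tmul_mul_tmul, mul_assoc]
  V_mul u v := by
    induction u with
    | zero => simp
    | add u₁ u₂ h₁ h₂ => simp [add_mul, h₁, h₂]
    | tmul y b =>
      induction v with
      | zero => simp
      | add v₁ v₂ h₁ h₂ => simp [mul_add, h₁, h₂]
      | tmul z c => simp [Algebra.TensorProduct.tmul_mul_tmul, mul_assoc]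
  compat u v := by
    induction u with
    | zero => simp
    | add u₁ u₂ h₁ h₂ => simp [add_mul, h₁, h₂]
    | tmul y b =>
      induction v with
      | zero => simp
      | add v₁ v₂ h₁ h₂ => simp only [map_add, mul_add, h₁, h₂]
      | tmul z c => simp [Algebra.TensorProduct.tmul_mul_tmul, mul_assoc]

/-- The multiplier `m ⊗ a` of `R ⊗ A`, for `m ∈ M(R)`, `a ∈ A`. -/
def mtensor (m : Multiplier k R) (a : A) : Multiplier k (R ⊗[k] A) where
  U := map m.U (LinearMap.mulLeft k a)
  V := map m.V (LinearMap.mulRight k a)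
  U_mul u v := by
    induction u with
    | zero => simp
    | add u₁ u₂ h₁ h₂ => simp [add_mul, h₁, h₂]
    | tmul y b =>
      induction v with
      | zero => simp
      | add v₁ v₂ h₁ h₂ => simp [mul_add, h₁, h₂]
      | tmul z c => simp [Algebra.TensorProduct.tmul_mul_tmul, mul_assoc, m.U_mul]
  V_mul u v := by
    induction u with
    | zero => simp
    | add u₁ u₂ h₁ h₂ => simp [add_mul, h₁, h₂]
    | tmul y b =>
      induction v with
      | zero => simp
      | add v₁ v₂ h₁ h₂ => simp [mul_add, h₁, h₂]
      | tmul z c => simp [Algebra.TensorProduct.tmul_mul_tmul, mul_assoc, m.V_mul]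
  compat u v := by
    induction u with
    | zero => simp
    | add u₁ u₂ h₁ h₂ => simp [add_mul, h₁, h₂]
    | tmul y b =>
      induction v with
      | zero => simp
      | add v₁ v₂ h₁ h₂ => simp only [map_add, mul_add, h₁, h₂]
      | tmul z c => simp [Algebra.TensorProduct.tmul_mul_tmul, mul_assoc, m.compat]

/-- The multiplier `m ⊗ 1` of `R ⊗ A`, for `m ∈ M(R)`. -/
def mtensorOne (m : Multiplier k R) : Multiplier k (R ⊗[k] A) where
  U := map m.U LinearMap.id
  V := map m.V LinearMap.id
  U_mul u v := by
    induction u with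
    | zero => simp
    | add u₁ u₂ h₁ h₂ => simp [add_mul, h₁, h₂]
    | tmul y b =>
      induction v with
      | zero => simp
      | add v₁ v₂ h₁ h₂ => simp [mul_add, h₁, h₂]
      | tmul z c => simp [Algebra.TensorProduct.tmul_mul_tmul, m.U_mul]
  V_mul u v := by
    induction u with
    | zero => simp
    | add u₁ u₂ h₁ h₂ => simp [add_mul, h₁, h₂]
    | tmul y b =>
      induction v with
      | zero => simp
      | add v₁ v₂ h₁ h₂ => simp [mul_add, h₁, h₂]
      | tmul z c => simp [Algebra.TensorProduct.tmul_mul_tmul, m.V_mul]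
  compat u v := by
    induction u with
    | zero => simp
    | add u₁ u₂ h₁ h₂ => simp [add_mul, h₁, h₂]
    | tmul y b =>
      induction v with
      | zero => simp
      | add v₁ v₂ h₁ h₂ => simp only [map_add, mul_add, h₁, h₂]
      | tmul z c => simp [Algebra.TensorProduct.tmul_mul_tmul, m.compat]

/-- Apply a functional to the second tensor factor:  `x ⊗ a ↦ f a • x`. -/
def apT (f : A →ₗ[k] k) : R ⊗[k] A →ₗ[k] R :=
  (TensorProduct.rid k R).toLinearMap ∘ₗ lTensor R f

@[simp] lemma apT_tmul (f : A →ₗ[k] k) (x : R) (a : A) :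
    apT k R A f (x ⊗ₜ a) = f a • x := rfl

/-- Sum of pure tensors attached to a list of pairs. -/
def psum {M N : Type*} [AddCommGroup M] [Module k M] [AddCommGroup N] [Module k N]
    (l : List (M × N)) : M ⊗[k] N :=
  (l.map fun p => p.1 ⊗ₜ[k] p.2).sum

end Tensor
section MHAdef

variable (A : Type*) [NonUnitalRing A] [Module k A] [SMulCommClass k A A] [IsScalarTower k A A]

/-- Apply a functional to the first tensor factor: `a ⊗ b ↦ f a • b`. -/
def apF (f : A →ₗ[k] k) : A ⊗[k] A →ₗ[k] A :=
  (TensorProduct.lid k A).toLinearMap ∘ₗ rTensor A f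

@[simp] lemma apF_tmul (f : A →ₗ[k] k) (a b : A) : apF k A f (a ⊗ₜ b) = f a • b := rfl

/-- A *regular multiplier Hopf algebra* structure on a nondegenerate algebra `A`:
a comultiplication `Δ : A → M(A ⊗ A)` such that the four Galois-type maps
`T1 : a ⊗ b ↦ Δ(a)(1 ⊗ b)`, `T2 : a ⊗ b ↦ (a ⊗ 1)Δ(b)`, `T3 : a ⊗ b ↦ Δ(a)(b ⊗ 1)`,
`T4 : a ⊗ b ↦ (1 ⊗ b)Δ(a)` are (well-defined and) bijective from `A ⊗ A` onto `A ⊗ A`,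
together with its counit `ε` and (bijective) antipode `S`, subject to the usual axioms
(coassociativity and the counit and antipode laws, in their `T1`/`T2`-covered form). -/
structure MHA where
  nondeg : NondegProd A
  comul : A →ₗ[k] Multiplier k (A ⊗[k] A)
  comul_mul : ∀ a b : A, comul (a * b) = comul a * comul b
  T1 : A ⊗[k] A ≃ₗ[k] A ⊗[k] A
  T2 : A ⊗[k] A ≃ₗ[k] A ⊗[k] A
  T3 : A ⊗[k] A ≃ₗ[k] A ⊗[k] A
  T4 : A ⊗[k] A ≃ₗ[k] A ⊗[k] A
  hT1 : ∀ a b : A, comul a * oneT k A A b = Multiplier.incl (T1 (a ⊗ₜ b))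
  hT2 : ∀ a b : A, tOne k A A a * comul b = Multiplier.incl (T2 (a ⊗ₜ b))
  hT3 : ∀ a b : A, comul a * tOne k A A b = Multiplier.incl (T3 (a ⊗ₜ b))
  hT4 : ∀ a b : A, oneT k A A b * comul a = Multiplier.incl (T4 (a ⊗ₜ b))
  coassoc : ∀ a b c : A,
    (TensorProduct.assoc k A A A)
        ((rTensor A (T2.toLinearMap ∘ₗ TensorProduct.mk k A A a)) (T1 (b ⊗ₜ c)))
      = (lTensor A (T1.toLinearMap ∘ₗ (TensorProduct.mk k A A).flip c)) (T2 (a ⊗ₜ b))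
  counit : A →ₗ[k] k
  counit_mul : ∀ a b : A, counit (a * b) = counit a * counit b
  hcounit1 : ∀ a b : A, apF k A counit (T1 (a ⊗ₜ b)) = a * b
  hcounit2 : ∀ a b : A, apT k A A counit (T2 (a ⊗ₜ b)) = a * b
  S : A ≃ₗ[k] A
  S_antimul : ∀ a b : A, S (a * b) = S b * S a
  hS1 : ∀ a b : A, LinearMap.mul' k A ((rTensor A S.toLinearMap) (T1 (a ⊗ₜ b))) = counit a • b
  hS2 : ∀ a b : A, LinearMap.mul' k A ((lTensor A S.toLinearMap) (T2 (a ⊗ₜ b))) = counit b • a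

end MHAdef

section PComod

variable {k}
variable {A : Type*} [NonUnitalRing A] [Module k A] [SMulCommClass k A A] [IsScalarTower k A A]
variable (H : MHA k A)
variable (R : Type*) [NonUnitalRing R] [Module k R] [SMulCommClass k R R] [IsScalarTower k R R]

/-- `(R, ρ, E)` is a *partial `A`-comodule algebra* (Definition 3.5).  The data
`rmap`/`lmap` records the elements `ρ(x)(1 ⊗ a)` and `(1 ⊗ a)ρ(x)` of `R ⊗ A`.
Condition `c3` is the coassociativity
`(ρ ⊗ ι)(ρ(x)) = (E ⊗ 1)(ι ⊗ Δ)(ρ(x))` in its fully covered form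
`x⁽⁰⁾⁽⁰⁾ ⊗ x⁽⁰⁾⁽¹⁾a ⊗ x⁽¹⁾b = Σᵢ E(x⁽⁰⁾ ⊗ (x⁽¹⁾aᵢ)₍₁₎) ⊗ (x⁽¹⁾aᵢ)₍₂₎bᵢ`
for any representation `Σᵢ aᵢ ⊗ bᵢ = T1⁻¹(a ⊗ b)`. -/
structure IsPComod (ρ : R →ₗ[k] Multiplier k (R ⊗[k] A)) (E : Multiplier k (R ⊗[k] A))
    (rmap : R →ₗ[k] A →ₗ[k] R ⊗[k] A) (lmap : A →ₗ[k] R →ₗ[k] R ⊗[k] A) : Prop where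
  ρ_mul : ∀ x y : R, ρ (x * y) = ρ x * ρ y
  ρ_inj : Function.Injective ρ
  E_idem : E * E = E
  hrmap : ∀ (x : R) (a : A), ρ x * oneT k R A a = Multiplier.incl (rmap x a)
  hlmap : ∀ (a : A) (x : R), oneT k R A a * ρ x = Multiplier.incl (lmap a x)
  c1l : ∀ a : A, ∃ l : List (Multiplier k R × A),
      oneT k R A a * E = (l.map fun p => mtensor k R A p.1 p.2).sum
  c1r : ∀ a : A, ∃ l : List (Multiplier k R × A),
      E * oneT k R A a = (l.map fun p => mtensor k R A p.1 p.2).sum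
  c2l : ∀ (x : R) (a : A), ∃ u : R ⊗[k] A, rmap x a = E.U u
  c2r : ∀ (a : A) (x : R), ∃ u : R ⊗[k] A, lmap a x = E.V u
  c3 : ∀ (x : R) (a b : A) (l : List (A × A)), psum k l = H.T1.symm (a ⊗ₜ b) →
      rTensor A (rmap.flip a) (rmap x b)
        = (l.map fun p => (rTensor A E.U) ((TensorProduct.assoc k R A A).symm
            ((lTensor R (H.T1.toLinearMap ∘ₗ (TensorProduct.mk k A A).flip p.2))
              (rmap x p.1)))).sum

/-- A *symmetric* partial `A`-comodule algebra (Definition 3.5 (iv)):  additionally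
`(ρ ⊗ ι)(ρ(x)) = (ι ⊗ Δ)(ρ(x))(E ⊗ 1)`, in the fully covered form
`x⁽⁰⁾⁽⁰⁾ ⊗ ax⁽⁰⁾⁽¹⁾ ⊗ bx⁽¹⁾ = Σᵢ (x⁽⁰⁾ ⊗ (aᵢx⁽¹⁾)₍₁₎)E ⊗ bᵢ(aᵢx⁽¹⁾)₍₂₎` for any
representation `Σᵢ aᵢ ⊗ bᵢ = T4⁻¹(a ⊗ b)`. -/
structure IsSymPComod (ρ : R →ₗ[k] Multiplier k (R ⊗[k] A)) (E : Multiplier k (R ⊗[k] A))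
    (rmap : R →ₗ[k] A →ₗ[k] R ⊗[k] A) (lmap : A →ₗ[k] R →ₗ[k] R ⊗[k] A)
    extends IsPComod H R ρ E rmap lmap : Prop where
  c4 : ∀ (x : R) (a b : A) (l : List (A × A)), psum k l = H.T4.symm (a ⊗ₜ b) →
      rTensor A (lmap a) (lmap b x)
        = (l.map fun p => (rTensor A E.V) ((TensorProduct.assoc k R A A).symm
            ((lTensor R (H.T4.toLinearMap ∘ₗ (TensorProduct.mk k A A).flip p.2))
              (lmap p.1 x)))).sum

/-- `R` is a (global) right `A`-comodule algebra via `ρ` (Definition 3.1), with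
`rmap`/`lmap` recording `ρ(x)(1 ⊗ a) ∈ R ⊗ A` and `(1 ⊗ a)ρ(x) ∈ R ⊗ A`;
coassociativity `(ρ ⊗ ι)ρ = (ι ⊗ Δ)ρ` is stated in its fully covered form. -/
structure IsComod (ρ : R →ₗ[k] Multiplier k (R ⊗[k] A))
    (rmap : R →ₗ[k] A →ₗ[k] R ⊗[k] A) (lmap : A →ₗ[k] R →ₗ[k] R ⊗[k] A) : Prop where
  ρ_mul : ∀ x y : R, ρ (x * y) = ρ x * ρ y
  ρ_inj : Function.Injective ρ
  hrmap : ∀ (x : R) (a : A), ρ x * oneT k R A a = Multiplier.incl (rmap x a)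
  hlmap : ∀ (a : A) (x : R), oneT k R A a * ρ x = Multiplier.incl (lmap a x)
  coassoc : ∀ (x : R) (a b : A) (l : List (A × A)), psum k l = H.T1.symm (a ⊗ₜ b) →
      rTensor A (rmap.flip a) (rmap x b)
        = (l.map fun p => (TensorProduct.assoc k R A A).symm
            ((lTensor R (H.T1.toLinearMap ∘ₗ (TensorProduct.mk k A A).flip p.2))
              (rmap x p.1))).sum

end PComod
section PMod

variable {k}
variable {A : Type*} [NonUnitalRing A] [Module k A] [SMulCommClass k A A] [IsScalarTower k A A]
variable (H : MHA k A)
variable (R : Type*) [NonUnitalRing R] [Module k R] [SMulCommClass k R R] [IsScalarTower k R R]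

/-- `(R, ⬝, 𝔢)` is a *partial `A`-module algebra* (Definition 4.5).  Sweedler
expressions are stated for arbitrary list representations of the corresponding
covered elements; e.g. condition (i) reads
`a ⬝ (x (b ⬝ y)) = Σᵢ (pᵢ ⬝ x)(qᵢ ⬝ y)` whenever `Σᵢ pᵢ ⊗ qᵢ = Δ(a)(1 ⊗ b) = T1(a ⊗ b)`,
and in (ii) one uses the covering `a₍₁₎ ⊗ S(a₍₂₎)b = (ι ⊗ S)((1 ⊗ S⁻¹(b))Δ(a))`. -/
structure IsPModAlg (act : A →ₗ[k] R →ₗ[k] R) (e : A →ₗ[k] Multiplier k R) : Prop where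
  cond1 : ∀ (a b : A) (x y : R) (l : List (A × A)), psum k l = H.T1 (a ⊗ₜ b) →
      act a (x * act b y) = (l.map fun p => act p.1 x * act p.2 y).sum
  cond2a : ∀ (a b : A) (x : R) (l : List (A × A)), psum k l = H.T4 (a ⊗ₜ H.S.symm b) →
      (e a).U (act b x) = (l.map fun p => act p.1 (act (H.S p.2) x)).sum
  cond2b : ∀ (a : A) (x : R),
      (e a).U x ∈ Submodule.span k {z : R | ∃ (b : A) (y : R), z = act b y}
  cond3 : ∀ (la : List A) (lx : List R), ∃ b : A,
      (∀ a ∈ la, a * b = a ∧ b * a = a) ∧ ∀ a ∈ la, ∀ x ∈ lx, act a x = act a (act b x)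
  cond4 : ∀ x : R, (∀ a : A, act a x = 0) → x = 0

/-- A *symmetric* partial `A`-module algebra (Definition 4.5 (v)-(vii)).  In (vi),
one uses the covering `a₍₂₎ ⊗ S⁻¹(a₍₁₎)b = σ((S⁻¹ ⊗ ι)((S(b) ⊗ 1)Δ(a)))`. -/
structure IsSymPModAlg (act : A →ₗ[k] R →ₗ[k] R) (e : A →ₗ[k] Multiplier k R)
    extends IsPModAlg H R act e : Prop where
  cond5 : ∀ (a b : A) (x y : R) (l : List (A × A)), psum k l = H.T3 (a ⊗ₜ b) →
      act a (act b x * y) = (l.map fun p => act p.1 x * act p.2 y).sum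
  cond6 : ∀ (a b : A) (x : R) (l : List (A × A)), psum k l = H.T2 (H.S b ⊗ₜ a) →
      (e a).V (act b x) = (l.map fun p => act p.2 (act (H.S.symm p.1) x)).sum
  cond7 : ∀ (a : A) (x : R),
      (e a).V x ∈ Submodule.span k {z : R | ∃ (b : A) (y : R), z = act b y}

/-- `R` is a (global, unitary) left `A`-module algebra (Definition 4.1). -/
structure IsModAlg (act : A →ₗ[k] R →ₗ[k] R) : Prop where
  assoc : ∀ (a b : A) (x : R), act a (act b x) = act (a * b) x
  unital : Submodule.span k {z : R | ∃ (a : A) (x : R), z = act a x} = ⊤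
  mul_cond : ∀ (a b : A) (x y : R) (l : List (A × A)), psum k l = H.T1 (a ⊗ₜ b) →
      act a (x * act b y) = (l.map fun p => act p.1 x * act p.2 y).sum

end PMod

section Dual

variable {k}
variable {A : Type*} [NonUnitalRing A] [Module k A] [SMulCommClass k A A] [IsScalarTower k A A]
variable (H : MHA k A)
variable (Ahat : Type*) [NonUnitalRing Ahat] [Module k Ahat] [SMulCommClass k Ahat Ahat]
  [IsScalarTower k Ahat Ahat] (Hh : MHA k Ahat)

/-- A realization of the *dual* `Â = {φ(– a) : a ∈ A}` of a regular multiplier Hopf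
algebra `A` with left integral `φ` (as in (2.1)): a regular multiplier Hopf algebra
`Â` together with the linear bijections `hat : a ↦ φ(– a)` and `hat' : b ↦ φ(b –)`,
the evaluation pairing `ev`, the product rule `(ŵ û)(c) = (w ⊗ u)(Δ c)`, the
coproduct rules (2.5) and (2.6) read through `hat`, and the modular element
`δ ∈ M(A)` of (5.1), `(φ ⊗ ι)Δ(a) = φ(a)δ`. -/
structure DualPair where
  φ : A →ₗ[k] k
  φ_ne : φ ≠ 0
  /-- `(ι ⊗ φ)((b ⊗ 1)Δ(a)) = φ(a) b` : left invariance of the integral. -/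
  φ_int : ∀ a b : A, apT k A A φ (H.T2 (b ⊗ₜ a)) = φ a • b
  /-- `(ι ⊗ φ)(Δ(a)(b ⊗ 1)) = φ(a) b` : left invariance of the integral. -/
  φ_int' : ∀ a b : A, apT k A A φ (H.T3 (a ⊗ₜ b)) = φ a • b
  hat : A ≃ₗ[k] Ahat
  hat' : A ≃ₗ[k] Ahat
  ev : Ahat →ₗ[k] A →ₗ[k] k
  ev_hat : ∀ a x : A, ev (hat a) x = φ (x * a)
  ev_hat' : ∀ b x : A, ev (hat' b) x = φ (b * x)
  /-- the product of `Â`: `(φ(– a) u)(c) = Σ φ(c₍₁₎ a) u(c₍₂₎)`. -/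
  ev_mul : ∀ (a : A) (u : Ahat) (c : A),
      ev (hat a * u) c
        = (TensorProduct.lid k k) ((map φ (ev u)) (H.T3 (c ⊗ₜ a)))
  /-- identity (2.5): `Δ̂(φ(– a))(1 ⊗ φ(– b)) = φ(– S⁻¹(b₍₁₎)a) ⊗ φ(– b₍₂₎)`,
  read through `hat⁻¹ ⊗ hat⁻¹` and covered on the right leg by `c`. -/
  hatT1 : ∀ a b c : A,
      (lTensor A (LinearMap.mulRight k c))
          ((map hat.symm.toLinearMap hat.symm.toLinearMap) (Hh.T1 (hat a ⊗ₜ hat b)))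
        = rTensor A (LinearMap.mulRight k a ∘ₗ H.S.symm.toLinearMap) (H.T1 (b ⊗ₜ c))
  /-- identity (2.6): `(ι ⊗ Ŝ)((1 ⊗ Ŝ⁻¹(φ(– b)))Δ̂(φ(– a))) = φ(– b₍₁₎a) ⊗ φ(– b₍₂₎)`,
  read through `hat⁻¹ ⊗ hat⁻¹` and covered on the right leg by `c`. -/
  hatT2 : ∀ a b c : A,
      (lTensor A (LinearMap.mulRight k c))
          ((map hat.symm.toLinearMap hat.symm.toLinearMap)
            ((lTensor Ahat Hh.S.toLinearMap) (Hh.T4 (hat a ⊗ₜ Hh.S.symm (hat b)))))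
        = rTensor A (LinearMap.mulRight k a) (H.T1 (b ⊗ₜ c))
  /-- the modular element `δ`, with `(φ ⊗ ι)(Δ(a)(1 ⊗ b)) = φ(a) • (δ b)`. -/
  delta : Multiplier k A
  deltaInv : Multiplier k A
  delta_inv : delta * deltaInv = 1 ∧ deltaInv * delta = 1
  hdelta : ∀ a b : A, apF k A φ (H.T1 (a ⊗ₜ b)) = φ a • delta.U b

end Dual

/-! If `R` is a global comodule algebra, comparing the two coassociativity laws shows that
`E ⊗ 1` fixes every `(ι ⊗ Δ)(ρ(x)(1 ⊗ c))(1 ⊗ 1 ⊗ d)`, hence `E` fixes all their slices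
`(ι ⊗ ι ⊗ g)(…)`. For `t ∈ R ⊗ A` the element `z = t E - t` therefore annihilates these slices
from the left. Bijectivity of `T2 : a ⊗ b ↦ (a ⊗ 1)Δ(b)` and nondegeneracy of `A` turn this into
`z₁₂ (ρ(x)(1 ⊗ c))₁₃ = 0`; applying the counit to the last leg, where
`(ι ⊗ ε)(ρ(x)(1 ⊗ c)) = ε(c) x`, gives `z (x ⊗ 1) = 0` for all `x`, so `z = 0` and `E = 1`.
Conversely, for `E = 1` the partial coassociativity is the global one. -/

section Slice

variable {k}
variable {M N P : Type*} [AddCommGroup M] [Module k M] [AddCommGroup N] [Module k N]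
  [AddCommGroup P] [Module k P]

def sliceLeft (f : M →ₗ[k] k) : M ⊗[k] N →ₗ[k] N :=
  (TensorProduct.lid k N).toLinearMap ∘ₗ rTensor N f

def sliceRight (g : N →ₗ[k] k) : M ⊗[k] N →ₗ[k] M :=
  (TensorProduct.rid k M).toLinearMap ∘ₗ lTensor M g

@[simp] lemma sliceLeft_tmul (f : M →ₗ[k] k) (m : M) (n : N) :
    sliceLeft f (m ⊗ₜ n) = f m • n := rfl

@[simp] lemma sliceRight_tmul (g : N →ₗ[k] k) (m : M) (n : N) :
    sliceRight g (m ⊗ₜ n) = g n • m := rfl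

lemma sliceLeft_lTensor (f : M →ₗ[k] k) (φ : N →ₗ[k] P) (w : M ⊗[k] N) :
    sliceLeft f (lTensor M φ w) = φ (sliceLeft f w) := by
  induction w with
  | zero => simp
  | add u v hu hv => simp [hu, hv]
  | tmul m n => simp

lemma sliceRight_rTensor (g : N →ₗ[k] k) (φ : M →ₗ[k] P) (w : M ⊗[k] N) :
    sliceRight g (rTensor N φ w) = φ (sliceRight g w) := by
  induction w with
  | zero => simp
  | add u v hu hv => simp [hu, hv]
  | tmul m n => simp

lemma sliceRight_lTensor (g : N →ₗ[k] k) (φ : P →ₗ[k] N) (w : M ⊗[k] P) :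
    sliceRight g (lTensor M φ w) = sliceRight (g ∘ₗ φ) w := by
  induction w with
  | zero => simp
  | add u v hu hv => simp [hu, hv]
  | tmul m n => simp

lemma sliceRight_assoc_symm (g : P →ₗ[k] k) (w : M ⊗[k] (N ⊗[k] P)) :
    sliceRight g ((TensorProduct.assoc k M N P).symm w) = lTensor M (sliceRight g) w := by
  induction w with
  | zero => simp
  | add u v hu hv => simp [hu, hv]
  | tmul m w =>
    induction w with
    | zero => simp
    | add u v hu hv => simp only [tmul_add, map_add, hu, hv]
    | tmul n p => simp

lemma exists_psum_eq (w : M ⊗[k] N) : ∃ l : List (M × N), psum k l = w := by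
  induction w with
  | zero => exact ⟨[], rfl⟩
  | add u v hu hv =>
    obtain ⟨lu, rfl⟩ := hu
    obtain ⟨lv, rfl⟩ := hv
    exact ⟨lu ++ lv, by simp [psum]⟩
  | tmul m n => exact ⟨[(m, n)], by simp [psum]⟩

lemma eq_zero_of_forall_sliceLeft_eq_zero (w : M ⊗[k] N) (h : ∀ f : M →ₗ[k] k, sliceLeft f w = 0) :
    w = 0 := by
  classical
  let b := Module.Basis.ofVectorSpace k M
  refine (TensorProduct.equivFinsuppOfBasisLeft b).injective (Finsupp.ext fun i => ?_)
  rw [TensorProduct.equivFinsuppOfBasisLeft_apply, map_zero]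
  exact h (b.coord i)

lemma eq_zero_of_forall_sliceRight_eq_zero (w : M ⊗[k] N)
    (h : ∀ g : N →ₗ[k] k, sliceRight g w = 0) : w = 0 := by
  classical
  let b := Module.Basis.ofVectorSpace k N
  refine (TensorProduct.equivFinsuppOfBasisRight b).injective (Finsupp.ext fun i => ?_)
  rw [TensorProduct.equivFinsuppOfBasisRight_apply, map_zero]
  exact h (b.coord i)

lemma eq_zero_of_forall_lTensor_eq_zero {ι : Type*} (φ : ι → N →ₗ[k] P)
    (hφ : ∀ n, (∀ i, φ i n = 0) → n = 0) (w : M ⊗[k] N) (h : ∀ i, lTensor M (φ i) w = 0) :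
    w = 0 :=
  eq_zero_of_forall_sliceLeft_eq_zero w fun f =>
    hφ _ fun i => by rw [← sliceLeft_lTensor, h i, map_zero]

lemma eq_zero_of_forall_rTensor_eq_zero {ι : Type*} (φ : ι → M →ₗ[k] P)
    (hφ : ∀ m, (∀ i, φ i m = 0) → m = 0) (w : M ⊗[k] N) (h : ∀ i, rTensor N (φ i) w = 0) :
    w = 0 :=
  eq_zero_of_forall_sliceRight_eq_zero w fun g =>
    hφ _ fun i => by rw [← sliceRight_rTensor, h i, map_zero]

end Slice

section Nondeg

variable {k}
variable {M N : Type*} [NonUnitalRing M] [Module k M] [SMulCommClass k M M] [IsScalarTower k M M]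
  [NonUnitalRing N] [Module k N] [SMulCommClass k N N] [IsScalarTower k N N]

lemma mul_tmul_eq_map (z : M ⊗[k] N) (y : M) (a : N) :
    z * (y ⊗ₜ a) = map (mulRight k y) (mulRight k a) z := by
  induction z with
  | zero => simp
  | add u v hu hv => simp [add_mul, hu, hv]
  | tmul m n => simp [Algebra.TensorProduct.tmul_mul_tmul]

lemma tmul_mul_eq_map (z : M ⊗[k] N) (y : M) (a : N) :
    (y ⊗ₜ a) * z = map (mulLeft k y) (mulLeft k a) z := by
  induction z with
  | zero => simp
  | add u v hu hv => simp [mul_add, hu, hv]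
  | tmul m n => simp [Algebra.TensorProduct.tmul_mul_tmul]

lemma NondegProd.tensor (hM : NondegProd M) (hN : NondegProd N) : NondegProd (M ⊗[k] N) := by
  constructor
  · intro z hz
    refine eq_zero_of_forall_rTensor_eq_zero (mulRight k) hM.1 z fun y =>
      eq_zero_of_forall_lTensor_eq_zero (mulRight k) hN.1 _ fun a => ?_
    rw [← LinearMap.comp_apply, lTensor_comp_rTensor, ← mul_tmul_eq_map, hz]
  · intro z hz
    refine eq_zero_of_forall_rTensor_eq_zero (mulLeft k) (fun m hm => hM.2 m hm) z fun y =>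
      eq_zero_of_forall_lTensor_eq_zero (mulLeft k) (fun n hn => hN.2 n hn) _ fun a => ?_
    rw [← LinearMap.comp_apply, lTensor_comp_rTensor, ← tmul_mul_eq_map, hz]

lemma Multiplier.eq_one_of_V_eq_self (hM : NondegProd M) (m : Multiplier k M)
    (hV : ∀ a, m.V a = a) : m = 1 := by
  have hU : ∀ b, m.U b = b := fun b =>
    sub_eq_zero.mp (hM.2 _ fun a => by rw [mul_sub, ← m.compat, hV, sub_self])
  exact Multiplier.ext (LinearMap.ext hU) (LinearMap.ext hV)

end Nondeg

namespace MHA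

variable {k}
variable {A : Type*} [NonUnitalRing A] [Module k A] [SMulCommClass k A A] [IsScalarTower k A A]
variable (H : MHA k A)

lemma rTensor_mulLeft_T1 (y c d : A) :
    rTensor A (mulLeft k y) (H.T1 (c ⊗ₜ d)) = lTensor A (mulRight k d) (H.T2 (y ⊗ₜ c)) := by
  refine sub_eq_zero.mp ((H.nondeg.tensor H.nondeg).1 _ fun t => ?_)
  rw [sub_mul, sub_eq_zero]
  calc rTensor A (mulLeft k y) (H.T1 (c ⊗ₜ d)) * t
      = (tOne k A A y).U ((Multiplier.incl (k := k) (H.T1 (c ⊗ₜ d))).U t) :=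
        ((tOne k A A y).U_mul _ t).symm
    _ = (Multiplier.incl (k := k) (H.T2 (y ⊗ₜ c))).U ((oneT k A A d).U t) := by
        rw [← H.hT1, ← H.hT2]; rfl
    _ = lTensor A (mulRight k d) (H.T2 (y ⊗ₜ c)) * t := ((oneT k A A d).compat _ t).symm

lemma sliceRight_counit_T1 (c d : A) : sliceRight H.counit (H.T1 (c ⊗ₜ d)) = H.counit d • c := by
  refine sub_eq_zero.mp (H.nondeg.2 _ fun y => ?_)
  rw [mul_sub, sub_eq_zero, mul_smul_comm]
  calc y * sliceRight H.counit (H.T1 (c ⊗ₜ d))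
      = sliceRight H.counit (lTensor A (mulRight k d) (H.T2 (y ⊗ₜ c))) := by
        rw [← rTensor_mulLeft_T1, sliceRight_rTensor, mulLeft_apply]
    _ = H.counit d • (y * c) := by
        have hε : H.counit ∘ₗ mulRight k d = H.counit d • H.counit :=
          LinearMap.ext fun e => by simp [H.counit_mul, mul_comm]
        have hslice : sliceRight (H.counit d • H.counit) = H.counit d • (apT k A A H.counit) :=
          TensorProduct.ext' fun _ _ => by simp [smul_smul]
        rw [sliceRight_lTensor, hε, hslice, LinearMap.smul_apply, H.hcounit2]

lemma sliceRight_counit_comp_T1 : sliceRight H.counit ∘ₗ H.T1.toLinearMap = sliceRight H.counit :=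
  TensorProduct.ext' fun c d => by simp [sliceRight_counit_T1]

lemma sliceRight_counit_T1_symm (w : A ⊗[k] A) :
    sliceRight H.counit (H.T1.symm w) = sliceRight H.counit w := by
  simpa using (LinearMap.congr_fun H.sliceRight_counit_comp_T1 (H.T1.symm w)).symm

lemma exists_counit_eq_one [Nontrivial A] : ∃ b : A, H.counit b = 1 := by
  by_contra! h
  have hc : H.counit = 0 := LinearMap.ext fun a => by
    by_contra ha
    exact h ((H.counit a)⁻¹ • a) (by simp [inv_mul_cancel₀ ha])
  obtain ⟨a, ha⟩ := exists_ne (0 : A)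
  refine ha (H.nondeg.1 a fun b => ?_)
  simpa [hc, apF] using (H.hcounit1 a b).symm

lemma mul'_surjective (H : MHA k A) [Nontrivial A] : Function.Surjective (LinearMap.mul' k A) := by
  obtain ⟨b, hb⟩ := H.exists_counit_eq_one
  have h : apF k A H.counit ∘ₗ H.T1.toLinearMap = LinearMap.mul' k A :=
    TensorProduct.ext' fun c d => H.hcounit1 c d
  refine fun c => ⟨H.T1.symm (b ⊗ₜ c), ?_⟩
  simpa [hb] using (LinearMap.congr_fun h (H.T1.symm (b ⊗ₜ c))).symm

end MHA

section Legs

variable {k}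
variable {A : Type*} [NonUnitalRing A] [Module k A] [SMulCommClass k A A] [IsScalarTower k A A]
variable {R : Type*} [NonUnitalRing R] [Module k R] [SMulCommClass k R R] [IsScalarTower k R R]

lemma Multiplier.ext_of_mul_oneT (hRA : NondegProd (R ⊗[k] A))
    (hA : Function.Surjective (LinearMap.mul' k A)) {m m' : Multiplier k (R ⊗[k] A)}
    (h : ∀ a, m * oneT k R A a = m' * oneT k R A a) : m = m' := by
  have hU : m.U = m'.U := TensorProduct.ext' fun y c => by
    obtain ⟨w, rfl⟩ := hA c
    induction w with
    | zero => simp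
    | add u v hu hv => simp only [map_add, tmul_add, hu, hv]
    | tmul a b => simpa [oneT] using congrArg (fun n => n.U (y ⊗ₜ b)) (h a)
  refine Multiplier.ext hU (LinearMap.ext fun t => sub_eq_zero.mp (hRA.1 _ fun s => ?_))
  rw [sub_mul, m.compat, m'.compat, hU, sub_self]

/-- `(ι ⊗ T1)` on the last two legs: `u ⊗ d ↦ (ι ⊗ Δ)(u)(1 ⊗ 1 ⊗ d)`. -/
def MHA.T1₂₃ (H : MHA k A) : (R ⊗[k] A) ⊗[k] A →ₗ[k] (R ⊗[k] A) ⊗[k] A :=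
  (TensorProduct.assoc k R A A).symm.toLinearMap ∘ₗ lTensor R H.T1.toLinearMap ∘ₗ
    (TensorProduct.assoc k R A A).toLinearMap

/-- `legMul z u = z₁₂ u₁₃`, i.e. `(r ⊗ c) (y ⊗ e) ↦ r y ⊗ c ⊗ e`. -/
def legMul : R ⊗[k] A →ₗ[k] R ⊗[k] A →ₗ[k] R ⊗[k] (A ⊗[k] A) :=
  (TensorProduct.mk k _ _).compr₂
    (rTensor (A ⊗[k] A) (LinearMap.mul' k R) ∘ₗ (tensorTensorTensorComm k R A R A).toLinearMap)

@[simp] lemma legMul_tmul (r y : R) (c e : A) :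
    legMul (r ⊗ₜ[k] c) (y ⊗ₜ e) = (r * y) ⊗ₜ (c ⊗ₜ e) := by
  simp [legMul]

namespace MHA

variable (H : MHA k A)

lemma T1₂₃_tmul (u : R ⊗[k] A) (d : A) :
    H.T1₂₃ (u ⊗ₜ d)
      = (TensorProduct.assoc k R A A).symm
          (lTensor R (H.T1.toLinearMap ∘ₗ (TensorProduct.mk k A A).flip d) u) := by
  induction u with
  | zero => simp
  | add u v hu hv => simp only [add_tmul, map_add, hu, hv]
  | tmul r e => simp [T1₂₃]

lemma T1₂₃_rTensor_psum (φ : A →ₗ[k] R ⊗[k] A) (l : List (A × A)) :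
    H.T1₂₃ (rTensor A φ (psum k l))
      = (l.map fun p => (TensorProduct.assoc k R A A).symm
          (lTensor R (H.T1.toLinearMap ∘ₗ (TensorProduct.mk k A A).flip p.2) (φ p.1))).sum := by
  simp only [psum, map_list_sum, List.map_map]
  exact congrArg List.sum (List.map_congr_left fun p _ => by simp [H.T1₂₃_tmul])

lemma sliceRight_counit_T1₂₃ (w : (R ⊗[k] A) ⊗[k] A) :
    sliceRight H.counit (H.T1₂₃ w) = sliceRight H.counit w := by
  rw [T1₂₃, LinearMap.comp_apply, LinearMap.comp_apply, LinearEquiv.coe_coe,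
    sliceRight_assoc_symm, ← LinearMap.comp_apply (lTensor R _), ← lTensor_comp,
    sliceRight_counit_comp_T1, ← sliceRight_assoc_symm]
  simp

lemma mul_sliceRight_T1₂₃ (z u : R ⊗[k] A) (g : A →ₗ[k] k) (d : A) :
    z * sliceRight g (H.T1₂₃ (u ⊗ₜ d))
      = lTensor R (sliceRight (g ∘ₗ mulRight k d) ∘ₗ H.T2.toLinearMap) (legMul z u) := by
  induction z with
  | zero => simp
  | add z₁ z₂ h₁ h₂ => simp only [add_mul, h₁, h₂, map_add, LinearMap.add_apply]
  | tmul r c =>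
    induction u with
    | zero => simp
    | add u₁ u₂ h₁ h₂ => simp only [add_tmul, map_add, mul_add, h₁, h₂]
    | tmul y e =>
      have hc : c * sliceRight g (H.T1 (e ⊗ₜ d))
          = sliceRight (g ∘ₗ mulRight k d) (H.T2 (c ⊗ₜ e)) := by
        rw [← mulLeft_apply (R := k), ← sliceRight_rTensor, rTensor_mulLeft_T1, sliceRight_lTensor]
      simp [T1₂₃, sliceRight_assoc_symm, Algebra.TensorProduct.tmul_mul_tmul, hc]

lemma legMul_eq_zero_of_forall_mul_sliceRight_T1₂₃ {z u : R ⊗[k] A}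
    (h : ∀ g d, z * sliceRight g (H.T1₂₃ (u ⊗ₜ d)) = 0) : legMul z u = 0 := by
  have hsep : ∀ v : A ⊗[k] A, (∀ p : (A →ₗ[k] k) × A,
      sliceRight (p.1 ∘ₗ mulRight k p.2) v = 0) → v = 0 := fun v hv =>
    eq_zero_of_forall_lTensor_eq_zero (mulRight k) H.nondeg.1 v fun d =>
      eq_zero_of_forall_sliceRight_eq_zero _ fun g => by rw [sliceRight_lTensor]; exact hv (g, d)
  have hT2 : lTensor R H.T2.toLinearMap (legMul z u) = 0 :=
    eq_zero_of_forall_lTensor_eq_zero _ hsep _ fun p => by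
      rw [← LinearMap.comp_apply, ← lTensor_comp, ← mul_sliceRight_T1₂₃]
      exact h p.1 p.2
  rwa [← LinearEquiv.coe_lTensor, LinearEquiv.coe_coe, LinearEquiv.map_eq_zero_iff] at hT2

end MHA

lemma lTensor_sliceRight_legMul (z u : R ⊗[k] A) (g : A →ₗ[k] k) :
    lTensor R (sliceRight g) (legMul z u) = rTensor A (mulRight k (sliceRight g u)) z := by
  induction z with
  | zero => simp
  | add z₁ z₂ h₁ h₂ => simp only [map_add, LinearMap.add_apply, h₁, h₂]
  | tmul r c =>
    induction u with
    | zero => simp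
    | add u₁ u₂ h₁ h₂ =>
      simp only [map_add, h₁, h₂, mul_add, rTensor_tmul, mulRight_apply, add_tmul]
    | tmul y e => simp [mul_smul_comm, smul_tmul']

end Legs

section Comodule

variable {k}
variable {A : Type*} [NonUnitalRing A] [Module k A] [SMulCommClass k A A] [IsScalarTower k A A]
variable {R : Type*} [NonUnitalRing R] [Module k R] [SMulCommClass k R R] [IsScalarTower k R R]
variable {H : MHA k A} {ρ : R →ₗ[k] Multiplier k (R ⊗[k] A)} {E : Multiplier k (R ⊗[k] A)}
  {rmap : R →ₗ[k] A →ₗ[k] R ⊗[k] A} {lmap : A →ₗ[k] R →ₗ[k] R ⊗[k] A}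

lemma IsComod.rTensor_rmap_rmap (hc : IsComod H R ρ rmap lmap) (x : R) (a b : A) :
    rTensor A (rmap.flip a) (rmap x b) = H.T1₂₃ (rTensor A (rmap x) (H.T1.symm (a ⊗ₜ b))) := by
  obtain ⟨l, hl⟩ := exists_psum_eq (H.T1.symm (a ⊗ₜ b))
  rw [hc.coassoc x a b l hl, ← hl, H.T1₂₃_rTensor_psum]

lemma IsPComod.rTensor_rmap_rmap (h : IsPComod H R ρ E rmap lmap) (x : R) (a b : A) :
    rTensor A (rmap.flip a) (rmap x b)
      = rTensor A E.U (H.T1₂₃ (rTensor A (rmap x) (H.T1.symm (a ⊗ₜ b)))) := by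
  obtain ⟨l, hl⟩ := exists_psum_eq (H.T1.symm (a ⊗ₜ b))
  rw [h.c3 x a b l hl, ← hl, H.T1₂₃_rTensor_psum, map_list_sum, List.map_map]
  rfl

lemma IsComod.sliceRight_counit_rmap [Nontrivial A] (hR : NondegProd R)
    (hc : IsComod H R ρ rmap lmap) (x : R) (b : A) :
    sliceRight H.counit (rmap x b) = H.counit b • x := by
  refine hc.ρ_inj (Multiplier.ext_of_mul_oneT (hR.tensor H.nondeg) H.mul'_surjective fun a => ?_)
  rw [hc.hrmap, hc.hrmap, map_smul, LinearMap.smul_apply]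
  congr 1
  simpa [sliceRight_rTensor, H.sliceRight_counit_T1₂₃, H.sliceRight_counit_T1_symm] using
    congrArg (sliceRight H.counit) (hc.rTensor_rmap_rmap x a b)

lemma IsPComod.E_U_sliceRight_T1₂₃ (h : IsPComod H R ρ E rmap lmap)
    (hc : IsComod H R ρ rmap lmap) (x : R) (c d : A) (g : A →ₗ[k] k) :
    E.U (sliceRight g (H.T1₂₃ (rmap x c ⊗ₜ d))) = sliceRight g (H.T1₂₃ (rmap x c ⊗ₜ d)) := by
  have hfix : (rTensor A E.U ∘ₗ H.T1₂₃ ∘ₗ rTensor A (rmap x)) ∘ₗ H.T1.symm.toLinearMap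
      = (H.T1₂₃ ∘ₗ rTensor A (rmap x)) ∘ₗ H.T1.symm.toLinearMap :=
    TensorProduct.ext' fun a b => by
      simp only [LinearMap.comp_apply, LinearEquiv.coe_coe]
      rw [← h.rTensor_rmap_rmap, hc.rTensor_rmap_rmap]
  have := LinearMap.congr_fun hfix (H.T1 (c ⊗ₜ d))
  simp only [LinearMap.comp_apply, LinearEquiv.coe_coe, LinearEquiv.symm_apply_apply,
    rTensor_tmul] at this
  rw [← sliceRight_rTensor, this]

lemma IsPComod.eq_one_of_isComod [Nontrivial A] (hR : NondegProd R)
    (h : IsPComod H R ρ E rmap lmap) (hc : IsComod H R ρ rmap lmap) : E = 1 := by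
  refine Multiplier.eq_one_of_V_eq_self (hR.tensor H.nondeg) E fun t => sub_eq_zero.mp ?_
  have hlegs : ∀ x c, legMul (E.V t - t) (rmap x c) = 0 := fun x c =>
    H.legMul_eq_zero_of_forall_mul_sliceRight_T1₂₃ fun g d => by
      rw [sub_mul, E.compat, h.E_U_sliceRight_T1₂₃ hc, sub_self]
  obtain ⟨b, hb⟩ := H.exists_counit_eq_one
  refine eq_zero_of_forall_rTensor_eq_zero (mulRight k) hR.1 _ fun x => ?_
  simpa [lTensor_sliceRight_legMul, hc.sliceRight_counit_rmap hR, hb] using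
    congrArg (lTensor R (sliceRight H.counit)) (hlegs x b)

end Comodule

section Statements
variable {k}
variable {A : Type*} [NonUnitalRing A] [Module k A] [SMulCommClass k A A] [IsScalarTower k A A]
variable {R : Type*} [NonUnitalRing R] [Module k R] [SMulCommClass k R R] [IsScalarTower k R R]

/-- **Proposition 3.9.** Let `(R, ρ, E)` be a partial `A`-comodule algebra over a regular
multiplier Hopf algebra `A`.  Then `R` is a (global) `A`-comodule algebra via `ρ` if and
only if `E = 1_{M(R)} ⊗ 1_{M(A)}`, i.e. `E` is the identity multiplier of `R ⊗ A`. -/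
theorem partial_comodule_global_iff_E_one
    (H : MHA k A) (hR : NondegProd R)
    (ρ : R →ₗ[k] Multiplier k (R ⊗[k] A)) (E : Multiplier k (R ⊗[k] A))
    (rmap : R →ₗ[k] A →ₗ[k] R ⊗[k] A) (lmap : A →ₗ[k] R →ₗ[k] R ⊗[k] A)
    (h : IsPComod H R ρ E rmap lmap) :
    IsComod H R ρ rmap lmap ↔ E = 1 := by
  constructor
  · intro hc
    rcases subsingleton_or_nontrivial A with hA | hA
    · exact Multiplier.ext (Subsingleton.elim _ _) (Subsingleton.elim _ _)
    · exact h.eq_one_of_isComod hR hc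
  · rintro rfl
    exact ⟨h.ρ_mul, h.ρ_inj, h.hrmap, h.hlmap, fun x a b l hl => by simpa using h.c3 x a b l hl⟩

end Statements
end
end

section
/- Let (R, ·, 𝔢) be a partial A-module algebra over a regular multiplier Hopf algebra A with counit ε. Then R is a (global unitary) left A-module algebra via · if and only if 𝔢(a) = ε(a)·1_{M(R)} for all a ∈ A. -/
/- ## Preliminaries: multiplier algebras and (regular) multiplier Hopf algebras -/

open scoped TensorProduct
open TensorProduct LinearMap
set_option linter.unusedSectionVars false

noncomputable section

variable (k : Type*) [Field k]

/-! Condition (ii) reads `𝔢(a)(S(c)·x) = a₍₁₎·(S(c a₍₂₎)·x)`, while the antipode gives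
`a₍₁₎ S(c a₍₂₎) = ε(a) S(c)`. So `𝔢(a) = ε(a)` on `A·R` exactly when `p·(q·x) = pq·x` for all
`p ⊗ q = a₍₁₎ ⊗ S(c a₍₂₎)`, and these elements exhaust `A ⊗ A` because `T4` and `S` are bijective.
For a global action `A·R` spans `R`, and nondegeneracy of `R` recovers the multiplier `𝔢(a)` from
its left part. Conversely, if `𝔢 = ε·1` then `𝔢(A)R ⊆ A·R` gives unitality (when `ε = 0`, already
`A = 0` and then `R = 0`). -/

section LocalUnits

variable {k}

def HasRightLocalUnits (A : Type*) [Mul A] : Prop :=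
  ∀ l : List A, ∃ b : A, ∀ a ∈ l, a * b = a

variable {A B : Type*} [NonUnitalRing A] [Module k A] [SMulCommClass k A A] [IsScalarTower k A A]
  [NonUnitalRing B] [Module k B] [SMulCommClass k B B] [IsScalarTower k B B]

lemma TensorProduct.exists_mul_tmul_eq_self (hA : HasRightLocalUnits A)
    (hB : HasRightLocalUnits B) (z : A ⊗[k] B) : ∃ (b : A) (c : B), z * (b ⊗ₜ c) = z := by
  suffices ∃ (la : List A) (lb : List B), ∀ b c, (∀ a ∈ la, a * b = a) →
      (∀ x ∈ lb, x * c = x) → z * (b ⊗ₜ c) = z by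
    obtain ⟨la, lb, hz⟩ := this
    obtain ⟨b, hb⟩ := hA la
    obtain ⟨c, hc⟩ := hB lb
    exact ⟨b, c, hz b c hb hc⟩
  induction z with
  | zero => exact ⟨[], [], fun _ _ _ _ => zero_mul _⟩
  | tmul a x =>
    refine ⟨[a], [x], fun b c hb hc => ?_⟩
    rw [Algebra.TensorProduct.tmul_mul_tmul, hb a (by simp), hc x (by simp)]
  | add z w hz hw =>
    obtain ⟨la, lb, hz⟩ := hz
    obtain ⟨la', lb', hw⟩ := hw
    refine ⟨la ++ la', lb ++ lb', fun b c hb hc => ?_⟩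
    rw [add_mul, hz b c (fun a ha => hb a (by simp [ha])) (fun x hx => hc x (by simp [hx])),
      hw b c (fun a ha => hb a (by simp [ha])) (fun x hx => hc x (by simp [hx]))]

lemma Multiplier.incl_injective_of_hasRightLocalUnits (hA : HasRightLocalUnits A)
    (hB : HasRightLocalUnits B) :
    Function.Injective (Multiplier.incl (k := k) : A ⊗[k] B → Multiplier k (A ⊗[k] B)) := by
  intro X Y hXY
  obtain ⟨b, c, hbc⟩ := TensorProduct.exists_mul_tmul_eq_self hA hB (X - Y)
  have : (X - Y) * (b ⊗ₜ c) = 0 := by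
    rw [sub_mul, ← Multiplier.incl_U (k := k), hXY, Multiplier.incl_U, sub_self]
  exact sub_eq_zero.mp (hbc.symm.trans this)

end LocalUnits

namespace Multiplier

variable {k} {A : Type*} [NonUnitalRing A] [Module k A] [SMulCommClass k A A]
  [IsScalarTower k A A]

lemma mul_incl (m : Multiplier k A) (u : A) : m * incl u = incl (m.U u) := by
  ext x
  · exact m.U_mul u x
  · exact m.compat x u

lemma ext_of_U (hA : NondegProd A) {m n : Multiplier k A} (h : m.U = n.U) : m = n := by
  ext x
  · rw [h]
  · refine sub_eq_zero.mp (hA.1 _ fun y => ?_)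
    rw [sub_mul, m.compat, n.compat, h, sub_self]

end Multiplier

lemma commute_tOne_oneT {A : Type*} [NonUnitalRing A] [Module k A] [SMulCommClass k A A]
    [IsScalarTower k A A] (d c : A) : Commute (tOne k A A d) (oneT k A A c) := by
  ext w x <;> simp [tOne, oneT]

namespace MHA

variable {k} {A : Type*} [NonUnitalRing A] [Module k A] [SMulCommClass k A A]
  [IsScalarTower k A A] (H : MHA k A)

lemma subsingleton_of_counit_eq_zero (hε : H.counit = 0) : Subsingleton A := by
  refine ⟨fun a a' => ?_⟩
  have hmul : ∀ a b : A, a * b = 0 := fun a b => by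
    rw [← H.hcounit1, hε]
    simp [apF]
  rw [H.nondeg.1 a (hmul a), H.nondeg.1 a' (hmul a')]

def mulS : A ⊗[k] A →ₗ[k] A :=
  LinearMap.mul' k A ∘ₗ lTensor A H.S.toLinearMap

@[simp] lemma mulS_tmul (p q : A) : H.mulS (p ⊗ₜ q) = p * H.S q := by
  simp [mulS]

lemma mulS_rTensor_mulLeft (d : A) (u : A ⊗[k] A) :
    H.mulS (rTensor A (LinearMap.mulLeft k d) u) = d * H.mulS u := by
  induction u with
  | zero => simp
  | add u v hu hv => simp only [map_add, mul_add, hu, hv]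
  | tmul p q => simp [mul_assoc]

lemma mulS_lTensor_mulLeft (c : A) (u : A ⊗[k] A) :
    H.mulS (lTensor A (LinearMap.mulLeft k c) u) = H.mulS u * H.S c := by
  induction u with
  | zero => simp
  | add u v hu hv => simp only [map_add, add_mul, hu, hv]
  | tmul p q => simp [H.S_antimul, mul_assoc]

/-- Both sides are `(d ⊗ 1)(1 ⊗ c)Δ(a)`: the multipliers `d ⊗ 1` and `1 ⊗ c` commute. -/
lemma rTensor_mulLeft_T4 (hA : HasRightLocalUnits A) (a c d : A) :
    rTensor A (LinearMap.mulLeft k d) (H.T4 (a ⊗ₜ c))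
      = lTensor A (LinearMap.mulLeft k c) (H.T2 (d ⊗ₜ a)) := by
  apply Multiplier.incl_injective_of_hasRightLocalUnits hA hA
  change Multiplier.incl ((tOne k A A d).U _) = Multiplier.incl ((oneT k A A c).U _)
  rw [← Multiplier.mul_incl, ← Multiplier.mul_incl, ← H.hT4, ← H.hT2, ← mul_assoc, ← mul_assoc,
    (commute_tOne_oneT k d c).eq]

/-- `a₍₁₎ S(c a₍₂₎) = a₍₁₎ S(a₍₂₎) S(c)`; after left multiplication by `d` the element
`(d ⊗ 1)(1 ⊗ c)Δ(a)` is covered by `T2`, where the antipode axiom applies. -/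
lemma mulS_T4 (hA : HasRightLocalUnits A) (a c : A) :
    H.mulS (H.T4 (a ⊗ₜ c)) = H.counit a • H.S c := by
  refine sub_eq_zero.mp (H.nondeg.2 _ fun d => ?_)
  have hS2 : H.mulS (H.T2 (d ⊗ₜ a)) = H.counit a • d := H.hS2 d a
  rw [mul_sub, ← mulS_rTensor_mulLeft, H.rTensor_mulLeft_T4 hA, mulS_lTensor_mulLeft, hS2,
    smul_mul_assoc, mul_smul_comm, sub_self]

end MHA

section PartialAction

variable {k} {A : Type*} [NonUnitalRing A] [Module k A] [SMulCommClass k A A]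
  [IsScalarTower k A A] {R : Type*} [NonUnitalRing R] [Module k R] [SMulCommClass k R R]
  [IsScalarTower k R R]

lemma exists_psum {M N : Type*} [AddCommGroup M] [Module k M] [AddCommGroup N] [Module k N]
    (u : M ⊗[k] N) : ∃ l : List (M × N), psum k l = u := by
  induction u with
  | zero => exact ⟨[], rfl⟩
  | tmul a b => exact ⟨[(a, b)], by simp [psum]⟩
  | add u v hu hv =>
    obtain ⟨l, rfl⟩ := hu
    obtain ⟨m, rfl⟩ := hv
    exact ⟨l ++ m, by simp [psum]⟩

def iteratedAct (act : A →ₗ[k] R →ₗ[k] R) : A ⊗[k] A →ₗ[k] R →ₗ[k] R :=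
  TensorProduct.lift (LinearMap.compl₁₂ (LinearMap.llcomp k R R R) act act)

@[simp] lemma iteratedAct_tmul (act : A →ₗ[k] R →ₗ[k] R) (p q : A) (x : R) :
    iteratedAct act (p ⊗ₜ q) x = act p (act q x) := rfl

lemma iteratedAct_lTensor_psum (act : A →ₗ[k] R →ₗ[k] R) (f : A →ₗ[k] A) (l : List (A × A))
    (x : R) :
    iteratedAct act (lTensor A f (psum k l)) x = (l.map fun p => act p.1 (act (f p.2) x)).sum := by
  induction l with
  | nil => simp [psum]
  | cons p l ih => simp_all [psum]

lemma iteratedAct_eq_of_assoc {act : A →ₗ[k] R →ₗ[k] R}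
    (hassoc : ∀ (a b : A) (x : R), act a (act b x) = act (a * b) x) :
    iteratedAct act = act ∘ₗ LinearMap.mul' k A := by
  ext a b x
  exact hassoc a b x

variable {H : MHA k A} {act : A →ₗ[k] R →ₗ[k] R} {e : A →ₗ[k] Multiplier k R}

namespace IsPModAlg

lemma hasRightLocalUnits (h : IsPModAlg H R act e) : HasRightLocalUnits A := fun l => by
  obtain ⟨b, hb, -⟩ := h.cond3 l []
  exact ⟨b, fun a ha => (hb a ha).1⟩

lemma e_U_act_S (h : IsPModAlg H R act e) (a c : A) (x : R) :
    (e a).U (act (H.S c) x) = iteratedAct act (lTensor A H.S.toLinearMap (H.T4 (a ⊗ₜ c))) x := by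
  obtain ⟨l, hl⟩ := exists_psum (H.T4 (a ⊗ₜ c))
  rw [h.cond2a a (H.S c) x l (by rw [H.S.symm_apply_apply, hl]), ← hl,
    iteratedAct_lTensor_psum]
  rfl

lemma e_eq_counit_smul_one (h : IsPModAlg H R act e) (hR : NondegProd R)
    (hglob : IsModAlg H R act) (a : A) : e a = H.counit a • (1 : Multiplier k R) := by
  refine Multiplier.ext_of_U hR (LinearMap.ext_on hglob.unital ?_)
  rintro _ ⟨b, x, rfl⟩
  obtain ⟨c, rfl⟩ := H.S.surjective b
  rw [h.e_U_act_S, iteratedAct_eq_of_assoc hglob.assoc]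
  change act (H.mulS _) x = _
  simp [H.mulS_T4 h.hasRightLocalUnits]

lemma iteratedAct_eq_of_e_eq (h : IsPModAlg H R act e)
    (he : ∀ a, e a = H.counit a • (1 : Multiplier k R)) :
    iteratedAct act = act ∘ₗ LinearMap.mul' k A := by
  rw [← LinearEquiv.eq_comp_toLinearMap_iff (e₁₂ := H.T4.trans (LinearEquiv.lTensor A H.S))]
  refine TensorProduct.ext' fun a c => LinearMap.ext fun x => ?_
  change iteratedAct act (lTensor A H.S.toLinearMap (H.T4 (a ⊗ₜ c))) x
    = act (H.mulS (H.T4 (a ⊗ₜ c))) x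
  rw [← h.e_U_act_S, he a, H.mulS_T4 h.hasRightLocalUnits]
  simp

lemma span_act_eq_top_of_e_eq (h : IsPModAlg H R act e)
    (he : ∀ a, e a = H.counit a • (1 : Multiplier k R)) :
    Submodule.span k {z : R | ∃ (a : A) (x : R), z = act a x} = ⊤ := by
  refine Submodule.eq_top_iff'.mpr fun x => ?_
  by_cases hε : H.counit = 0
  · have := H.subsingleton_of_counit_eq_zero hε
    have hx : x = 0 := h.cond4 x fun a => by rw [Subsingleton.elim a 0, map_zero,
      LinearMap.zero_apply]
    exact hx ▸ zero_mem _
  · obtain ⟨a, ha⟩ : ∃ a, H.counit a ≠ 0 := by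
      by_contra! h'
      exact hε (LinearMap.ext h')
    have hx := Submodule.smul_mem _ (H.counit a)⁻¹ (h.cond2b a x)
    simpa [he a, ha] using hx

lemma isModAlg_of_e_eq (h : IsPModAlg H R act e)
    (he : ∀ a, e a = H.counit a • (1 : Multiplier k R)) : IsModAlg H R act where
  assoc a b x :=
    LinearMap.congr_fun (LinearMap.congr_fun (h.iteratedAct_eq_of_e_eq he) (a ⊗ₜ b)) x
  unital := h.span_act_eq_top_of_e_eq he
  mul_cond := h.cond1

end IsPModAlg

end PartialAction

section Statements
variable {k}
variable {A : Type*} [NonUnitalRing A] [Module k A] [SMulCommClass k A A] [IsScalarTower k A A]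
variable {R : Type*} [NonUnitalRing R] [Module k R] [SMulCommClass k R R] [IsScalarTower k R R]

/-- **Proposition 4.8.**  Let `(R, ·, 𝔢)` be a partial `A`-module algebra over a regular
multiplier Hopf algebra `A` with counit `ε`.  Then `R` is a (global, unitary) left
`A`-module algebra via `·` if and only if `𝔢(a) = ε(a) 1_{M(R)}` for all `a ∈ A`. -/
theorem partial_action_global_iff
    (H : MHA k A) (hR : NondegProd R)
    (act : A →ₗ[k] R →ₗ[k] R) (e : A →ₗ[k] Multiplier k R)
    (h : IsPModAlg H R act e) :
    IsModAlg H R act ↔ ∀ a : A, e a = H.counit a • (1 : Multiplier k R) :=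
  ⟨fun hglob a => h.e_eq_counit_smul_one hR hglob a, h.isModAlg_of_e_eq⟩

end Statements
end
end
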